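/- Let X = Y ⊕₁ Z with Y, Z nontrivial Banach spaces admitting points (y₀,y₀*) ∈ Π(Y), (z₀,z₀*) ∈ Π(Z). Let δ ∈ (0,1), μ,θ ∈ [0,1] with 1-δ < μθ ≤ 2(1-δ). Then with k = (μ-θ+√((μ-θ)²+8(μθ-1+δ)))/(4μ), x₀ = (μk·y₀, μ(1-k)·z₀), x₀* = ((1-Ψ(μ,θ,δ))·y₀*, θ·z₀*), one has ‖x₀‖ = μ, ‖x₀*‖ = θ, x₀*(x₀) = 1-δ, and d_∞((x₀,x₀*),Π(X)) ≥ Ψ(μ,θ,δ). -/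

import Mathlib

open ContinuousLinearMap

/-- The function Ψ(μ,θ,δ) from the paper. -/
noncomputable def Psi (μ θ δ : ℝ) : ℝ :=
  (2 - μ - θ + Real.sqrt ((μ - θ)^2 + 8 * (μ * θ - 1 + δ))) / 2

/-- The set Π(X) of pairs of unit vectors and unit functionals attaining their norm. -/
def PiSet (X : Type*) [NormedAddCommGroup X] [NormedSpace ℝ X] : Set (X × (X →L[ℝ] ℝ)) :=
  {p | ‖p.1‖ = 1 ∧ ‖p.2‖ = 1 ∧ p.2 p.1 = 1}

/-!
The dual of `Y ⊕₁ Z` is `Y* ⊕_∞ Z*`, so `‖x₀*‖ = max (1 - Ψ) θ = θ`. If `(p, q) ∈ Π(X)` and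
`‖x₀* - q‖ < Ψ`, then `q` has norm `< 1` on `Y`, so `q p = 1` forces `p ∈ Z`, and then
`‖x₀ - p‖ ≥ ‖x₀.fst‖ + 1 - ‖x₀.snd‖ = 1 - μ + 2μk = Ψ`.
-/

section L1Coprod

variable {𝕜 Y Z E : Type*} [NontriviallyNormedField 𝕜]
  [SeminormedAddCommGroup Y] [NormedSpace 𝕜 Y] [SeminormedAddCommGroup Z] [NormedSpace 𝕜 Z]
  [SeminormedAddCommGroup E] [NormedSpace 𝕜 E]

noncomputable def l1Coprod (f : Y →L[𝕜] E) (g : Z →L[𝕜] E) : WithLp 1 (Y × Z) →L[𝕜] E :=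
  (f.comp (fst 𝕜 Y Z) + g.comp (snd 𝕜 Y Z)).comp
    (WithLp.prodContinuousLinearEquiv 1 𝕜 Y Z).toContinuousLinearMap

theorem l1Coprod_apply (f : Y →L[𝕜] E) (g : Z →L[𝕜] E) (x : WithLp 1 (Y × Z)) :
    l1Coprod f g x = f x.fst + g x.snd :=
  rfl

theorem norm_l1Coprod (f : Y →L[𝕜] E) (g : Z →L[𝕜] E) : ‖l1Coprod f g‖ = max ‖f‖ ‖g‖ := by
  apply le_antisymm
  · refine opNorm_le_bound _ (le_max_of_le_left (norm_nonneg f)) fun x => ?_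
    rw [l1Coprod_apply, WithLp.prod_norm_eq_of_L1, mul_add]
    calc ‖f x.fst + g x.snd‖ ≤ ‖f‖ * ‖x.fst‖ + ‖g‖ * ‖x.snd‖ :=
          (norm_add_le _ _).trans (add_le_add (f.le_opNorm _) (g.le_opNorm _))
      _ ≤ _ := by gcongr <;> simp
  · refine max_le (opNorm_le_bound _ (norm_nonneg _) fun y => ?_)
      (opNorm_le_bound _ (norm_nonneg _) fun z => ?_)
    · simpa [l1Coprod_apply] using (l1Coprod f g).le_opNorm (WithLp.toLp 1 (y, 0))
    · simpa [l1Coprod_apply] using (l1Coprod f g).le_opNorm (WithLp.toLp 1 (0, z))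

end L1Coprod

theorem le_norm_sub_of_fst_eq_zero {Y Z : Type*} [SeminormedAddCommGroup Y]
    [SeminormedAddCommGroup Z] (x : WithLp 1 (Y × Z)) {p : WithLp 1 (Y × Z)} (hp : ‖p‖ = 1)
    (hp₀ : p.fst = 0) : ‖x.fst‖ + 1 - ‖x.snd‖ ≤ ‖x - p‖ := by
  rw [WithLp.prod_norm_eq_of_L1] at hp ⊢
  rw [WithLp.sub_fst, WithLp.sub_snd, hp₀, sub_zero]
  rw [hp₀, norm_zero, zero_add] at hp
  linarith [norm_sub_norm_le p.snd x.snd, norm_sub_rev x.snd p.snd]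

section PiSet

variable {Y Z : Type*} [NormedAddCommGroup Y] [NormedSpace ℝ Y]
  [NormedAddCommGroup Z] [NormedSpace ℝ Z]

theorem toLp_inl_mem_PiSet {y : Y} {f : Y →L[ℝ] ℝ} (h : (y, f) ∈ PiSet Y) :
    (WithLp.toLp 1 (y, 0), l1Coprod f (0 : Z →L[ℝ] ℝ)) ∈ PiSet (WithLp 1 (Y × Z)) := by
  obtain ⟨hy, hf, hfy⟩ := h
  refine ⟨by rw [WithLp.norm_toLp_fst, hy], by simp [norm_l1Coprod, hf], ?_⟩
  simpa [l1Coprod_apply] using hfy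

theorem fst_eq_zero_of_mem_PiSet {f : Y →L[ℝ] ℝ} {c : ℝ} (hf : ‖f‖ ≤ c) (g : Z →L[ℝ] ℝ)
    {p : WithLp 1 (Y × Z) × (WithLp 1 (Y × Z) →L[ℝ] ℝ)} (hp : p ∈ PiSet (WithLp 1 (Y × Z)))
    (hclose : ‖l1Coprod f g - p.2‖ < 1 - c) : p.1.fst = 0 := by
  obtain ⟨x, q⟩ := p
  obtain ⟨hx, hq, hqx⟩ := hp
  set r := ‖l1Coprod f g - q‖
  have hsplit : x = WithLp.toLp 1 (x.fst, 0) + WithLp.toLp 1 (0, x.snd) := by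
    rw [← WithLp.toLp_add, Prod.mk_add_mk, add_zero, zero_add]
    rfl
  have hfst : q (WithLp.toLp 1 (x.fst, 0)) ≤ (c + r) * ‖x.fst‖ := by
    have hdiff := ((l1Coprod f g - q).le_opNorm (WithLp.toLp 1 (x.fst, 0)))
    rw [WithLp.norm_toLp_fst, sub_apply, l1Coprod_apply] at hdiff
    have hfx := (f.le_opNorm x.fst).trans (mul_le_mul_of_nonneg_right hf (norm_nonneg _))
    simp only [WithLp.toLp_fst, WithLp.toLp_snd, map_zero, add_zero, Real.norm_eq_abs] at hdiff hfx
    linarith [abs_le.mp hdiff, abs_le.mp hfx]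
  have hsnd : q (WithLp.toLp 1 (0, x.snd)) ≤ ‖x.snd‖ := by
    simpa [hq] using (le_abs_self _).trans (q.le_opNorm (WithLp.toLp 1 (0, x.snd)))
  have hsum : ‖x.fst‖ + ‖x.snd‖ = 1 := by rw [← WithLp.prod_norm_eq_of_L1, hx]
  have hqx' := congrArg q hsplit
  rw [hqx, map_add] at hqx'
  have hgap : (1 - c - r) * ‖x.fst‖ ≤ 0 := by nlinarith
  exact norm_le_zero_iff.mp (nonpos_of_mul_nonpos_right hgap (by linarith))

theorem le_max_norm_sub_of_mem_PiSet {f : Y →L[ℝ] ℝ} {c t : ℝ} (hf : ‖f‖ ≤ c)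
    (g : Z →L[ℝ] ℝ) (x : WithLp 1 (Y × Z)) (htc : t ≤ 1 - c) (htx : t ≤ ‖x.fst‖ + 1 - ‖x.snd‖)
    {p : WithLp 1 (Y × Z) × (WithLp 1 (Y × Z) →L[ℝ] ℝ)} (hp : p ∈ PiSet (WithLp 1 (Y × Z))) :
    t ≤ max ‖x - p.1‖ ‖l1Coprod f g - p.2‖ := by
  rcases lt_or_ge ‖l1Coprod f g - p.2‖ (1 - c) with hclose | hfar
  · have hp₀ := fst_eq_zero_of_mem_PiSet hf g hp hclose
    exact le_max_of_le_left (htx.trans (le_norm_sub_of_fst_eq_zero x hp.1 hp₀))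
  · exact le_max_of_le_right (htc.trans hfar)

end PiSet

theorem le_sInf_max_norm_sub {X : Type*} [NormedAddCommGroup X] [NormedSpace ℝ X]
    (hne : (PiSet X).Nonempty) {x : X} {F : X →L[ℝ] ℝ} {t : ℝ}
    (h : ∀ p ∈ PiSet X, t ≤ max ‖x - p.1‖ ‖F - p.2‖) :
    t ≤ sInf {r : ℝ | ∃ p ∈ PiSet X, r = max ‖x - p.1‖ ‖F - p.2‖} := by
  obtain ⟨p, hp⟩ := hne
  refine le_csInf ⟨_, p, hp, rfl⟩ ?_
  rintro r ⟨p, hp, rfl⟩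
  exact h p hp

section Arithmetic

variable {μ θ δ : ℝ}

/-- `μ k`: the larger root `K` of `2K² - (μ - θ)K = μθ - 1 + δ`. -/
noncomputable def psiRoot (μ θ δ : ℝ) : ℝ :=
  (μ - θ + √((μ - θ) ^ 2 + 8 * (μ * θ - 1 + δ))) / 4

theorem Psi_eq_psiRoot : Psi μ θ δ = 1 - μ + 2 * psiRoot μ θ δ := by
  unfold Psi psiRoot
  ring

theorem psi_abs_sub_le_sqrt (h : 1 - δ ≤ μ * θ) :
    |μ - θ| ≤ √((μ - θ) ^ 2 + 8 * (μ * θ - 1 + δ)) :=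
  Real.abs_le_sqrt (by linarith)

theorem psi_sqrt_le_add (hμ : 0 ≤ μ) (hθ : 0 ≤ θ) (h : μ * θ ≤ 2 * (1 - δ)) :
    √((μ - θ) ^ 2 + 8 * (μ * θ - 1 + δ)) ≤ μ + θ :=
  (Real.sqrt_le_left (by positivity)).mpr (by nlinarith)

theorem psiRoot_sq (h : 1 - δ ≤ μ * θ) :
    2 * psiRoot μ θ δ ^ 2 - (μ - θ) * psiRoot μ θ δ = μ * θ - 1 + δ := by
  have hs := Real.sq_sqrt (show 0 ≤ (μ - θ) ^ 2 + 8 * (μ * θ - 1 + δ) by nlinarith)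
  unfold psiRoot
  linear_combination hs / 8

theorem psiRoot_nonneg (h : 1 - δ ≤ μ * θ) : 0 ≤ psiRoot μ θ δ := by
  have := neg_abs_le (μ - θ)
  unfold psiRoot
  linarith [psi_abs_sub_le_sqrt h]

theorem psiRoot_le (hμ : 0 ≤ μ) (hθ : 0 ≤ θ) (h : μ * θ ≤ 2 * (1 - δ)) : psiRoot μ θ δ ≤ μ := by
  unfold psiRoot
  linarith [psi_sqrt_le_add hμ hθ h]

theorem one_sub_Psi_nonneg (hμ : 0 ≤ μ) (hθ : 0 ≤ θ) (h : μ * θ ≤ 2 * (1 - δ)) :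
    0 ≤ 1 - Psi μ θ δ := by
  unfold Psi
  linarith [psi_sqrt_le_add hμ hθ h]

theorem one_sub_Psi_le (h : 1 - δ ≤ μ * θ) : 1 - Psi μ θ δ ≤ θ := by
  unfold Psi
  linarith [le_abs_self (μ - θ), psi_abs_sub_le_sqrt h]

end Arithmetic

theorem ell1_sum_sharp_example_general (Y Z : Type*)
    [NormedAddCommGroup Y] [NormedSpace ℝ Y] [NormedAddCommGroup Z] [NormedSpace ℝ Z]
    (y₀ : Y) (f₀ : Y →L[ℝ] ℝ) (hy₀ : ‖y₀‖ = 1) (hf₀ : ‖f₀‖ = 1) (hfy₀ : f₀ y₀ = 1)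
    (z₀ : Z) (g₀ : Z →L[ℝ] ℝ) (hz₀ : ‖z₀‖ = 1) (hg₀ : ‖g₀‖ = 1) (hgz₀ : g₀ z₀ = 1)
    (δ μ θ : ℝ)
    (hθ : θ ∈ Set.Icc (0:ℝ) 1)
    (h1 : 1 - δ < μ * θ) (h2 : μ * θ ≤ 2 * (1 - δ))
    (k : ℝ) (hk : k = (μ - θ + Real.sqrt ((μ - θ)^2 + 8 * (μ * θ - 1 + δ))) / (4 * μ)) :
    ∀ x₀ : WithLp 1 (Y × Z), x₀ = (WithLp.equiv 1 (Y × Z)).symm ((μ * k) • y₀, (μ * (1 - k)) • z₀) →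
    ∀ F₀ : WithLp 1 (Y × Z) →L[ℝ] ℝ,
      F₀ = (((1 - Psi μ θ δ) • f₀).comp (ContinuousLinearMap.fst ℝ Y Z) +
            (θ • g₀).comp (ContinuousLinearMap.snd ℝ Y Z)).comp
           (WithLp.prodContinuousLinearEquiv 1 ℝ Y Z).toContinuousLinearMap →
    ‖x₀‖ = μ ∧ ‖F₀‖ = θ ∧ F₀ x₀ = 1 - δ ∧
      sInf {r : ℝ | ∃ p ∈ PiSet (WithLp 1 (Y × Z)),
        r = max ‖x₀ - p.1‖ ‖F₀ - p.2‖} ≥ Psi μ θ δ := by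
  intro x₀ hx₀ F₀ hF₀
  change F₀ = l1Coprod ((1 - Psi μ θ δ) • f₀) (θ • g₀) at hF₀
  subst hF₀
  have hμ : 0 < μ := pos_of_mul_pos_left (by linarith) hθ.1
  set K := psiRoot μ θ δ with hK
  have hμk : μ * k = K := by rw [hk, hK, psiRoot]; field_simp
  have hK0 : 0 ≤ K := psiRoot_nonneg h1.le
  have hKμ : K ≤ μ := psiRoot_le hμ.le hθ.1 h2
  have hΨ0 := one_sub_Psi_nonneg hμ.le hθ.1 h2
  have hΨθ := one_sub_Psi_le h1.le
  have hx_fst : ‖x₀.fst‖ = K := by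
    simp [hx₀, norm_smul, hy₀, hμk, abs_of_nonneg hK0]
  have hx_snd : ‖x₀.snd‖ = μ - K := by
    simp [hx₀, norm_smul, hz₀, mul_sub, hμk, abs_of_nonneg (sub_nonneg.mpr hKμ)]
  refine ⟨?_, ?_, ?_, ?_⟩
  · rw [WithLp.prod_norm_eq_of_L1, hx_fst, hx_snd]
    ring
  · simp [norm_l1Coprod, norm_smul, hf₀, hg₀, abs_of_nonneg hΨ0, abs_of_nonneg hθ.1, hΨθ]
  · simp only [hx₀, l1Coprod_apply, WithLp.equiv_symm_apply, WithLp.toLp_fst, WithLp.toLp_snd,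
      smul_apply, map_smul, hfy₀, hgz₀, smul_eq_mul, mul_sub, hμk]
    rw [Psi_eq_psiRoot]
    linear_combination - psiRoot_sq h1.le
  · refine le_sInf_max_norm_sub ⟨_, toLp_inl_mem_PiSet ⟨hy₀, hf₀, hfy₀⟩⟩ fun p hp =>
      le_max_norm_sub_of_mem_PiSet ?_ _ _ (sub_sub_cancel 1 _).ge ?_ hp
    · rw [norm_smul, hf₀, Real.norm_of_nonneg hΨ0, mul_one]
    · rw [hx_fst, hx_snd, Psi_eq_psiRoot]
      linarith

theorem ell1_sum_sharp_example (Y Z : Type*)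
    [NormedAddCommGroup Y] [NormedSpace ℝ Y] [NormedAddCommGroup Z] [NormedSpace ℝ Z]
    [Nontrivial Y] [Nontrivial Z]
    (y₀ : Y) (f₀ : Y →L[ℝ] ℝ) (hy₀ : ‖y₀‖ = 1) (hf₀ : ‖f₀‖ = 1) (hfy₀ : f₀ y₀ = 1)
    (z₀ : Z) (g₀ : Z →L[ℝ] ℝ) (hz₀ : ‖z₀‖ = 1) (hg₀ : ‖g₀‖ = 1) (hgz₀ : g₀ z₀ = 1)
    (δ μ θ : ℝ) (hδ : δ ∈ Set.Ioo (0:ℝ) 1)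
    (hμ : μ ∈ Set.Icc (0:ℝ) 1) (hθ : θ ∈ Set.Icc (0:ℝ) 1)
    (h1 : 1 - δ < μ * θ) (h2 : μ * θ ≤ 2 * (1 - δ))
    (k : ℝ) (hk : k = (μ - θ + Real.sqrt ((μ - θ)^2 + 8 * (μ * θ - 1 + δ))) / (4 * μ)) :
    ∀ x₀ : WithLp 1 (Y × Z), x₀ = (WithLp.equiv 1 (Y × Z)).symm ((μ * k) • y₀, (μ * (1 - k)) • z₀) →
    ∀ F₀ : WithLp 1 (Y × Z) →L[ℝ] ℝ,
      F₀ = (((1 - Psi μ θ δ) • f₀).comp (ContinuousLinearMap.fst ℝ Y Z) +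
            (θ • g₀).comp (ContinuousLinearMap.snd ℝ Y Z)).comp
           (WithLp.prodContinuousLinearEquiv 1 ℝ Y Z).toContinuousLinearMap →
    ‖x₀‖ = μ ∧ ‖F₀‖ = θ ∧ F₀ x₀ = 1 - δ ∧
      sInf {r : ℝ | ∃ p ∈ PiSet (WithLp 1 (Y × Z)),
        r = max ‖x₀ - p.1‖ ‖F₀ - p.2‖} ≥ Psi μ θ δ :=
  ell1_sum_sharp_example_general Y Z y₀ f₀ hy₀ hf₀ hfy₀ z₀ g₀ hz₀ hg₀ hgz₀ δ μ θ hθ h1 h2 k hk
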